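/- The intersection type theory 𝒯₀ with constants c₀, c₁ and the single extra axiom c₀→c₀ ≤ c₁→c₀ does not satisfy subject reduction: one can derive y:c₁ ⊢ (λx.x)y : c₀ but not y:c₁ ⊢ y : c₀. -/
import Mathlib


/-- Pure λ-terms with variables named by natural numbers. -/
inductive Tm : Type
  | var : ℕ → Tm
  | lam : ℕ → Tm → Tm
  | app : Tm → Tm → Tm
deriving DecidableEq

namespace Tm

/-- Free variables of a term. -/
def fv : Tm → Finset ℕ
  | var x => {x}
  | lam x t => fv t \ {x}
  | app t u => fv t ∪ fv u

/-- A variable fresh for a given finite set of variables. -/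
def fresh (s : Finset ℕ) : ℕ := (s.sup id) + 1

/-- Capture-avoiding simultaneous substitution. -/
def subst (σ : ℕ → Tm) : Tm → Tm
  | var x => σ x
  | app t u => app (subst σ t) (subst σ u)
  | lam x t =>
      let y := fresh ((fv t \ {x}).biUnion fun z => fv (σ z))
      lam y (subst (fun z => if z = x then var y else σ z) t)

/-- `M[x := N]`. -/
def subst1 (x : ℕ) (N M : Tm) : Tm :=
  subst (fun z => if z = x then N else var z) M

/-- `λx₁…xₙ. t`. -/
def lams (xs : List ℕ) (t : Tm) : Tm := xs.foldr lam t

/-- `t M₁ ⋯ Mₘ`. -/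
def apps (t : Tm) (ts : List Tm) : Tm := ts.foldl app t

/-- One-step β-reduction: contextual closure of the β-rule. -/
inductive Step : Tm → Tm → Prop
  | beta (x : ℕ) (M N : Tm) : Step (app (lam x M) N) (subst1 x N M)
  | appL {M M' : Tm} (N : Tm) : Step M M' → Step (app M N) (app M' N)
  | appR (M : Tm) {N N' : Tm} : Step N N' → Step (app M N) (app M N')
  | abs (x : ℕ) {M M' : Tm} : Step M M' → Step (lam x M) (lam x M')

/-- β-reduction: reflexive-transitive closure of one-step β-reduction. -/
def Red : Tm → Tm → Prop := Relation.ReflTransGen Step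

/-- β-convertibility: the equivalence relation generated by β-reduction. -/
def Conv : Tm → Tm → Prop := Relation.EqvGen Step

/-- `M` is solvable if `(λx⃗.M) N₁ ⋯ Nₙ` β-reduces to the identity,
where `x⃗` covers the free variables of `M`. -/
def Solvable (M : Tm) : Prop :=
  ∃ (xs : List ℕ) (Ns : List Tm) (y : ℕ),
    M.fv ⊆ xs.toFinset ∧ Red (apps (lams xs M) Ns) (lam y (var y))

/-- One-step head reduction: contraction of the head redex. -/
inductive HeadStep : Tm → Tm → Prop
  | beta (x : ℕ) (M N : Tm) (Ms : List Tm) :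
      HeadStep (apps (app (lam x M) N) Ms) (apps (subst1 x N M) Ms)
  | abs (x : ℕ) {M M' : Tm} : HeadStep M M' → HeadStep (lam x M) (lam x M')

end Tm

/-- Intersection types over a set `A` of constants, with top `𝖴`. -/
inductive Ty (A : Type) : Type
  | const : A → Ty A
  | top : Ty A
  | arrow : Ty A → Ty A → Ty A
  | inter : Ty A → Ty A → Ty A
deriving DecidableEq

/-- An intersection type theory: a subtyping relation on `Ty A` closed under
(Refl), (IncL), (IncR), (𝖴top), (Glb), (Trans) and (→∼). -/
structure ITT (A : Type) where
  le : Ty A → Ty A → Prop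
  le_refl : ∀ a, le a a
  le_incL : ∀ a b, le (Ty.inter b a) b
  le_incR : ∀ a b, le (Ty.inter b a) a
  le_top : ∀ a, le a Ty.top
  le_glb : ∀ {a b c}, le c a → le c b → le c (Ty.inter a b)
  le_trans : ∀ {a b c}, le a b → le b c → le a c
  arrow_cong : ∀ {a a' b b'}, le a a' → le a' a → le b b' → le b' b →
      le (Ty.arrow a b) (Ty.arrow a' b')

variable {A : Type}

/-- The equivalence `∼` induced by the subtyping. -/
def ITT.eqv (T : ITT A) (a b : Ty A) : Prop := T.le a b ∧ T.le b a

/-- Bases: (partial) mappings from term variables to types. -/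
def Ctx (A : Type) := ℕ → Option (Ty A)

def Ctx.empty : Ctx A := fun _ => none

/-- `Γ, x:a`. -/
def Ctx.update (Γ : Ctx A) (x : ℕ) (a : Ty A) : Ctx A :=
  fun y => if y = x then some a else Γ y

/-- The intersection type assignment system induced by an itt `T`:
rules (Ax), (𝖴), (→I), (→E), (∩I) and (≤). -/
inductive Der (T : ITT A) : Ctx A → Tm → Ty A → Prop
  | ax {Γ : Ctx A} {x a} : Γ x = some a → Der T Γ (Tm.var x) a
  | top {Γ M} : Der T Γ M Ty.top
  | arrI {Γ : Ctx A} {x M a b} :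
      Der T (Γ.update x b) M a → Der T Γ (Tm.lam x M) (Ty.arrow b a)
  | arrE {Γ M N a b} :
      Der T Γ M (Ty.arrow b a) → Der T Γ N b → Der T Γ (Tm.app M N) a
  | interI {Γ M a b} : Der T Γ M a → Der T Γ M b → Der T Γ M (Ty.inter a b)
  | sub {Γ M a b} : Der T Γ M a → T.le a b → Der T Γ M b

/-- Finite intersection `⋂_{i∈I} Aᵢ`, with `⋂_∅ = 𝖴`. -/
def interList : List (Ty A) → Ty A
  | [] => Ty.top
  | a :: l => Ty.inter a (interList l)

/-- The subtyping of the itt `𝒯₀` over the constants `c₀, c₁` generated by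
the basic axioms/rules plus the axiom `c₀→c₀ ≤ c₁→c₀`. -/
inductive T0le : Ty (Fin 2) → Ty (Fin 2) → Prop
  | refl (a) : T0le a a
  | incL (a b) : T0le (Ty.inter b a) b
  | incR (a b) : T0le (Ty.inter b a) a
  | top (a) : T0le a Ty.top
  | glb {a b c} : T0le c a → T0le c b → T0le c (Ty.inter a b)
  | trans {a b c} : T0le a b → T0le b c → T0le a c
  | arrow_cong {a a' b b'} : T0le a a' → T0le a' a → T0le b b' → T0le b' b →
      T0le (Ty.arrow a b) (Ty.arrow a' b')
  | ax : T0le (Ty.arrow (Ty.const 0) (Ty.const 0))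
      (Ty.arrow (Ty.const 1) (Ty.const 0))

/-- The itt `𝒯₀`. -/
def T0 : ITT (Fin 2) :=
  ⟨T0le, T0le.refl, T0le.incL, T0le.incR, T0le.top, T0le.glb, T0le.trans,
    T0le.arrow_cong⟩



/-- Valuation: true on `c₁`, `𝖴` and all arrows, false on `c₀`. -/
def v : Ty (Fin 2) → Prop
  | Ty.const i => i = 1
  | Ty.top => True
  | Ty.arrow _ _ => True
  | Ty.inter a b => v a ∧ v b

lemma v_mono {a b : Ty (Fin 2)} (h : T0le a b) : v a → v b := by
  induction h <;> simp_all [v]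

lemma var_v {Γ : Ctx (Fin 2)} {M a} (h : Der T0 Γ M a) (x : ℕ)
    (hM : M = Tm.var x) (hc : ∀ c, Γ x = some c → v c) : v a := by
  induction h <;> try (cases hM)
  case ax h => exact hc _ h
  case top => trivial
  case interI ih1 ih2 => exact ⟨ih1 rfl hc, ih2 rfl hc⟩
  case sub hle _ ih => exact v_mono hle (ih rfl hc)

/-- `𝒯₀` does not satisfy subject reduction:
`y:c₁ ⊢ (λx.x)y : c₀` is derivable but `y:c₁ ⊢ y : c₀` is not. -/
theorem T0_fails_subject_reduction :
    Der T0 (Ctx.empty.update 0 (Ty.const 1))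
      (Tm.app (Tm.lam 1 (Tm.var 1)) (Tm.var 0)) (Ty.const 0) ∧
    ¬ Der T0 (Ctx.empty.update 0 (Ty.const 1)) (Tm.var 0) (Ty.const 0) := by
  constructor
  · exact Der.arrE (Der.sub (Der.arrI (Der.ax rfl)) T0le.ax) (Der.ax rfl)
  · intro h
    have := var_v h 0 rfl (fun c hc => by
      simp [Ctx.update] at hc; subst hc; trivial)
    simp [v] at this
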